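/- arXiv:2110.00445 — 5 statements merged into one kernel-verified Lean document; each statement's English description precedes it below -/
import Mathlib

section
/- Let P be an n×n irreducible row-stochastic matrix with stationary distribution μ. Then the matrix I − P + e·μᵀ is invertible. -/
/-!
If `(I - P + e μᵀ) x = 0`, pairing with `μ` (which `I - P + e μᵀ` fixes from the left) gives
`μᵀ x = 0`, hence `P x = x`. By the maximum principle a `P`-harmonic vector is constant on
everything reachable from a maximum of it, so irreducibility makes `x` constant, and
`μᵀ x = 0` with `∑ μ = 1` forces that constant to be `0`.
-/

open Finset Matrix

namespace Matrix

variable {n R : Type*} [Fintype n] [DecidableEq n]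

theorem pow_mulVec_eq_self [Semiring R] {Q : Matrix n n R} {x : n → R} (hx : Q *ᵥ x = x)
    (m : ℕ) : Q ^ m *ᵥ x = x := by
  induction m with
  | zero => exact one_mulVec x
  | succ m ih => rw [pow_succ, ← mulVec_mulVec, hx, ih]

section Harmonic

variable [CommRing R] [LinearOrder R] [IsStrictOrderedRing R] {Q : Matrix n n R} {x : n → R}

theorem eq_of_mulVec_eq_self_of_forall_le (hQ : Q ∈ rowStochastic R n) (hx : Q *ᵥ x = x)
    {i j : n} (hmax : ∀ k, x k ≤ x i) (hpos : 0 < Q i j) : x j = x i := by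
  have hsum : ∑ k, Q i k * (x i - x k) = 0 := by
    simp only [mul_sub, sum_sub_distrib, ← sum_mul, sum_row_of_mem_rowStochastic hQ, one_mul]
    rw [sub_eq_zero]
    exact (congrFun hx i).symm
  have hterm := (sum_eq_zero_iff_of_nonneg fun k _ ↦
    mul_nonneg (nonneg_of_mem_rowStochastic hQ) (sub_nonneg.2 (hmax k))).1 hsum j (mem_univ j)
  exact (sub_eq_zero.1 ((mul_eq_zero.1 hterm).resolve_left hpos.ne')).symm

theorem IsIrreducible.eq_of_mulVec_eq_self (hirr : Q.IsIrreducible)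
    (hQ : Q ∈ rowStochastic R n) (hx : Q *ᵥ x = x) (i j : n) : x i = x j := by
  have hconst_from_max : ∀ {i₀}, (∀ k, x k ≤ x i₀) → ∀ k, x k = x i₀ := fun hmax k ↦ by
    obtain ⟨m, -, hm⟩ := (isIrreducible_iff_exists_pow_pos hirr.nonneg).1 hirr _ k
    exact eq_of_mulVec_eq_self_of_forall_le (pow_mem hQ m) (pow_mulVec_eq_self hx m) hmax hm
  have : Nonempty n := ⟨i⟩
  obtain ⟨i₀, hi₀⟩ := Finite.exists_max x
  rw [hconst_from_max hi₀ i, hconst_from_max hi₀ j]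

end Harmonic

section Field

variable [Field R] {P : Matrix n n R} {μ : n → R}

theorem eq_zero_of_one_sub_add_mulVec_eq_zero (hfix : ∀ x, P *ᵥ x = x → ∀ i j, x i = x j)
    (hμP : μ ᵥ* P = μ) (hμ : ∑ i, μ i = 1) {x : n → R}
    (hx : (1 - P + of fun _ j ↦ μ j) *ᵥ x = 0) : x = 0 := by
  have hμx : μ ⬝ᵥ x = 0 := by
    have hμA : μ ᵥ* (1 - P + of fun _ j ↦ μ j) = μ := by
      rw [vecMul_add, vecMul_sub, vecMul_one, hμP, sub_self, zero_add]
      ext j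
      simp [vecMul, dotProduct, ← sum_mul, hμ]
    rw [← hμA, ← dotProduct_mulVec, hx, dotProduct_zero]
  have hPx : P *ᵥ x = x := by
    have hrank_one : (of fun _ j ↦ μ j : Matrix n n R) *ᵥ x = 0 := funext fun _ ↦ hμx
    rw [add_mulVec, sub_mulVec, one_mulVec, hrank_one, add_zero, sub_eq_zero] at hx
    exact hx.symm
  ext i
  calc x i = ∑ j, μ j * x i := by rw [← sum_mul, hμ, one_mul]
    _ = μ ⬝ᵥ x := sum_congr rfl fun j _ ↦ by rw [hfix x hPx i j]
    _ = 0 := hμx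

theorem isUnit_one_sub_add_of_forall_eq (hfix : ∀ x, P *ᵥ x = x → ∀ i j, x i = x j)
    (hμP : μ ᵥ* P = μ) (hμ : ∑ i, μ i = 1) : IsUnit (1 - P + of fun _ j ↦ μ j) := by
  refine mulVec_injective_iff_isUnit.1 fun x y hxy ↦ sub_eq_zero.1 ?_
  exact eq_zero_of_one_sub_add_mulVec_eq_zero hfix hμP hμ (by rw [mulVec_sub, hxy, sub_self])

end Field

end Matrix

/-- For an irreducible row-stochastic matrix `P` with stationary
distribution `μ`, the matrix `I − P + e·μᵀ` is invertible. -/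
theorem fundamental_matrix_invertible
    {n : ℕ} (P : Matrix (Fin n) (Fin n) ℝ) (μ : Fin n → ℝ)
    (hP : (∀ i j, 0 ≤ P i j) ∧ ∀ i, ∑ j, P i j = 1)
    (hirr : ∀ i j : Fin n, ∃ m : ℕ, 1 ≤ m ∧ 0 < (P ^ m) i j)
    (hμ : (∀ i, 0 ≤ μ i) ∧ ∑ i, μ i = 1) (hμP : μ ᵥ* P = μ) :
    IsUnit (1 - P + Matrix.of (fun _ j : Fin n => μ j)) := by
  have hstoch : P ∈ rowStochastic ℝ (Fin n) := mem_rowStochastic_iff_sum.2 hP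
  have hP_irr : P.IsIrreducible := (isIrreducible_iff_exists_pow_pos hP.1).2 hirr
  exact isUnit_one_sub_add_of_forall_eq
    (fun _ hx ↦ hP_irr.eq_of_mulVec_eq_self hstoch hx) hμP hμ.2
end

section
/- Let P_s and P_r be n×n row-stochastic matrices with stationary distributions μ_s and μ_r respectively, such that |(P_s)_{ij} − (P_r)_{ij}| ≤ B_P for all i, j. Suppose the matrix Z = (I − P_s + e·μ_sᵀ)⁻¹ exists. Then ‖μ_s − μ_r‖₂ ≤ B_P · n · ‖Z‖_F, and in particular |μ_s(i) − μ_r(i)| ≤ B_P · n · ‖Z‖_F for every state i. -/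
/-!
With `A = I - Pₛ + e μₛᵀ` one has `μₛ A = μₛ` and `μᵣ A = μᵣ - μᵣ Pₛ + μₛ`, so
`(μₛ - μᵣ) A = μᵣ (Pₛ - Pᵣ)` and hence `μₛ - μᵣ = μᵣ (Pₛ - Pᵣ) Z`. Every entry of the row vector
`μᵣ (Pₛ - Pᵣ)` is a convex combination of entries of `Pₛ - Pᵣ`, so has modulus at most `B_P`, and
Cauchy–Schwarz column by column gives `‖μₛ - μᵣ‖₂ ≤ √n · B_P · ‖Z‖_F ≤ n · B_P · ‖Z‖_F`.
-/

open Finset Matrix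

section Perturbation

variable {ι : Type*} [Fintype ι]

theorem vecMul_of_const_rows {R : Type*} [CommSemiring R] {μ : ι → R} (hμ : ∑ i, μ i = 1)
    (ν : ι → R) : μ ᵥ* Matrix.of (fun _ j : ι => ν j) = ν := by
  ext j
  simp only [vecMul, dotProduct, of_apply, ← Finset.sum_mul, hμ, one_mul]

theorem sub_vecMul_fundamental {R : Type*} [CommRing R] [DecidableEq ι]
    {Ps Pr : Matrix ι ι R} {μs μr : ι → R}
    (hμs : ∑ i, μs i = 1) (hμsP : μs ᵥ* Ps = μs) (hμr : ∑ i, μr i = 1) (hμrP : μr ᵥ* Pr = μr) :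
    (μs - μr) ᵥ* (1 - Ps + Matrix.of (fun _ j : ι => μs j)) = μr ᵥ* (Ps - Pr) := by
  simp only [sub_vecMul, vecMul_add, vecMul_sub, vecMul_one, vecMul_of_const_rows hμs,
    vecMul_of_const_rows hμr, hμsP, hμrP]
  abel

theorem sub_eq_vecMul_fundamental_inv {R : Type*} [CommRing R] [DecidableEq ι]
    {Ps Pr : Matrix ι ι R} {μs μr : ι → R}
    (hμs : ∑ i, μs i = 1) (hμsP : μs ᵥ* Ps = μs) (hμr : ∑ i, μr i = 1) (hμrP : μr ᵥ* Pr = μr)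
    (hinv : IsUnit (1 - Ps + Matrix.of (fun _ j : ι => μs j))) :
    μs - μr = μr ᵥ* (Ps - Pr) ᵥ* (1 - Ps + Matrix.of (fun _ j : ι => μs j))⁻¹ := by
  rw [← sub_vecMul_fundamental hμs hμsP hμr hμrP, vecMul_vecMul,
    mul_nonsing_inv _ ((isUnit_iff_isUnit_det _).mp hinv), vecMul_one]

theorem abs_vecMul_sub_le_of_forall_abs_sub_le {P Q : Matrix ι ι ℝ} {μ : ι → ℝ} {B : ℝ}
    (hμ0 : ∀ i, 0 ≤ μ i) (hμ1 : ∑ i, μ i = 1) (hPQ : ∀ i j, |P i j - Q i j| ≤ B) (k : ι) :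
    |(μ ᵥ* (P - Q)) k| ≤ B :=
  calc |(μ ᵥ* (P - Q)) k| ≤ ∑ i, |μ i * (P i k - Q i k)| := abs_sum_le_sum_abs _ _
    _ ≤ ∑ i, μ i * B := by
        gcongr with i
        rw [abs_mul, abs_of_nonneg (hμ0 i)]
        exact mul_le_mul_of_nonneg_left (hPQ i k) (hμ0 i)
    _ = B := by rw [← Finset.sum_mul, hμ1, one_mul]

theorem sum_sq_vecMul_le {κ : Type*} [Fintype κ] (w : ι → ℝ) (Z : Matrix ι κ ℝ) :
    ∑ j, (w ᵥ* Z) j ^ 2 ≤ (∑ k, w k ^ 2) * ∑ k, ∑ j, Z k j ^ 2 :=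
  calc ∑ j, (w ᵥ* Z) j ^ 2 ≤ ∑ j, (∑ k, w k ^ 2) * ∑ k, Z k j ^ 2 :=
        sum_le_sum fun j _ => sum_mul_sq_le_sq_mul_sq _ _ _
    _ = (∑ k, w k ^ 2) * ∑ k, ∑ j, Z k j ^ 2 := by rw [← Finset.mul_sum, Finset.sum_comm]

theorem sum_sq_vecMul_le_of_forall_abs_le {κ : Type*} [Fintype κ] {w : ι → ℝ} {B : ℝ}
    (hw : ∀ k, |w k| ≤ B) (Z : Matrix ι κ ℝ) :
    ∑ j, (w ᵥ* Z) j ^ 2 ≤ Fintype.card ι * B ^ 2 * ∑ k, ∑ j, Z k j ^ 2 := by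
  refine (sum_sq_vecMul_le w Z).trans (mul_le_mul_of_nonneg_right ?_ (by positivity))
  calc ∑ k, w k ^ 2 ≤ ∑ _k : ι, B ^ 2 :=
        sum_le_sum fun k _ => sq_le_sq' (neg_le_of_abs_le (hw k)) (le_of_abs_le (hw k))
    _ = Fintype.card ι * B ^ 2 := by simp

end Perturbation

theorem stationary_distribution_perturbation_bound_general
    {n : ℕ} (Ps Pr : Matrix (Fin n) (Fin n) ℝ) (μs μr : Fin n → ℝ) (BP : ℝ)
    (hμs : (∀ i, 0 ≤ μs i) ∧ ∑ i, μs i = 1) (hμsP : μs ᵥ* Ps = μs)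
    (hμr : (∀ i, 0 ≤ μr i) ∧ ∑ i, μr i = 1) (hμrP : μr ᵥ* Pr = μr)
    (hclose : ∀ i j, |Ps i j - Pr i j| ≤ BP)
    (hinv : IsUnit (1 - Ps + Matrix.of (fun _ j : Fin n => μs j))) :
    Real.sqrt (∑ i, (μs i - μr i) ^ 2) ≤
      BP * n * Real.sqrt (∑ i, ∑ j,
        ((1 - Ps + Matrix.of (fun _ j : Fin n => μs j))⁻¹ i j) ^ 2) ∧
    ∀ i, |μs i - μr i| ≤
      BP * n * Real.sqrt (∑ i, ∑ j,
        ((1 - Ps + Matrix.of (fun _ j : Fin n => μs j))⁻¹ i j) ^ 2) := by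
  set Z := (1 - Ps + Matrix.of (fun _ j : Fin n => μs j))⁻¹
  have hdiff : ∀ i, μs i - μr i = (μr ᵥ* (Ps - Pr) ᵥ* Z) i :=
    congrFun (sub_eq_vecMul_fundamental_inv hμs.2 hμsP hμr.2 hμrP hinv)
  obtain ⟨i₀⟩ : Nonempty (Fin n) := by
    by_contra h
    simpa [not_nonempty_iff.mp h] using hμr.2
  have hBP : 0 ≤ BP := (abs_nonneg _).trans (hclose i₀ i₀)
  have hn : (n : ℝ) ≤ n ^ 2 := by
    nlinarith [(Nat.one_le_cast (α := ℝ)).mpr (Fin.pos i₀)]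
  have hsq : ∑ i, (μs i - μr i) ^ 2 ≤ (BP * n * √(∑ i, ∑ j, Z i j ^ 2)) ^ 2 := by
    simp only [hdiff, mul_pow, Real.sq_sqrt (by positivity : (0 : ℝ) ≤ ∑ i, ∑ j, Z i j ^ 2)]
    refine (sum_sq_vecMul_le_of_forall_abs_le
      (abs_vecMul_sub_le_of_forall_abs_sub_le hμr.1 hμr.2 hclose) Z).trans ?_
    rw [Fintype.card_fin, mul_comm (n : ℝ)]
    gcongr
  have hnorm := Real.sqrt_le_sqrt hsq
  rw [Real.sqrt_sq (by positivity)] at hnorm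
  exact ⟨hnorm, fun i => (Real.abs_le_sqrt
    (single_le_sum (f := fun i => (μs i - μr i) ^ 2) (fun _ _ => sq_nonneg _)
      (mem_univ i))).trans hnorm⟩

/-- If `Ps, Pr` are row-stochastic with stationary distributions `μs, μr`,
their entries are `B_P`-close, and `Z = (I − Ps + e·μsᵀ)⁻¹` exists, then
`‖μs − μr‖₂ ≤ B_P · n · ‖Z‖_F` and in particular each coordinate difference is bounded
by the same quantity. -/
theorem stationary_distribution_perturbation_bound
    {n : ℕ} (Ps Pr : Matrix (Fin n) (Fin n) ℝ) (μs μr : Fin n → ℝ) (BP : ℝ)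
    (hPs : (∀ i j, 0 ≤ Ps i j) ∧ ∀ i, ∑ j, Ps i j = 1)
    (hPr : (∀ i j, 0 ≤ Pr i j) ∧ ∀ i, ∑ j, Pr i j = 1)
    (hμs : (∀ i, 0 ≤ μs i) ∧ ∑ i, μs i = 1) (hμsP : μs ᵥ* Ps = μs)
    (hμr : (∀ i, 0 ≤ μr i) ∧ ∑ i, μr i = 1) (hμrP : μr ᵥ* Pr = μr)
    (hclose : ∀ i j, |Ps i j - Pr i j| ≤ BP)
    (hinv : IsUnit (1 - Ps + Matrix.of (fun _ j : Fin n => μs j))) :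
    Real.sqrt (∑ i, (μs i - μr i) ^ 2) ≤
      BP * n * Real.sqrt (∑ i, ∑ j,
        ((1 - Ps + Matrix.of (fun _ j : Fin n => μs j))⁻¹ i j) ^ 2) ∧
    ∀ i, |μs i - μr i| ≤
      BP * n * Real.sqrt (∑ i, ∑ j,
        ((1 - Ps + Matrix.of (fun _ j : Fin n => μs j))⁻¹ i j) ^ 2) :=
  stationary_distribution_perturbation_bound_general Ps Pr μs μr BP hμs hμsP hμr hμrP hclose hinv
end

section
/- Let P_s and P_r be n×n row-stochastic matrices (n ≥ 2), r̄ ∈ ℝ^n, η ∈ ℝ, and suppose v_s, v_r ∈ ℝ^n satisfy v_s = r̄ − η·e + P_s v_s and v_r = r̄ − η·e + P_r v_r together with the anchoring v_s(n) = v_r(n) = 0. Let P̃_s be the top-left (n−1)×(n−1) block of P_s and suppose Ĩ − P̃_s is invertible. Then for every index i, |v_s(i) − v_r(i)| ≤ ‖(Ĩ − P̃_s)⁻¹‖_F · ‖(P_s − P_r) v_r‖₂. -/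
/-!
Subtracting the two Bellman equations eliminates `r̄` and `η`: the difference `d = vs - vr` solves
`d = Ps d + (Ps - Pr) vr`. Since `d` vanishes at the anchored last state, the first `n` rows of
this system read `(Ĩ - P̃s) d̃ = w̃`, where `~` drops the last coordinate. Hence `d̃ = (Ĩ - P̃s)⁻¹ w̃`,
and Cauchy–Schwarz on one row bounds each coordinate by the Frobenius norm of the inverse times
`‖w̃‖₂ ≤ ‖w‖₂`.
-/

open Finset Matrix

lemma Matrix.sub_eq_mulVec_sub_add {ι R : Type*} [Fintype ι] [Ring R]
    (Ps Pr : Matrix ι ι R) {c vs vr : ι → R}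
    (hvs : vs = c + Ps *ᵥ vs) (hvr : vr = c + Pr *ᵥ vr) :
    vs - vr = Ps *ᵥ (vs - vr) + (Ps - Pr) *ᵥ vr := by
  rw [mulVec_sub, sub_mulVec]
  nth_rw 1 [hvs, hvr]
  abel

lemma Matrix.submatrix_castSucc_mulVec {n : ℕ} {R : Type*} [NonUnitalNonAssocSemiring R]
    (P : Matrix (Fin (n + 1)) (Fin (n + 1)) R) {d : Fin (n + 1) → R}
    (hd : d (Fin.last n) = 0) :
    P.submatrix Fin.castSucc Fin.castSucc *ᵥ (d ∘ Fin.castSucc) = (P *ᵥ d) ∘ Fin.castSucc := by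
  funext i
  simp [mulVec, dotProduct, Fin.sum_univ_castSucc, hd]

lemma Matrix.one_sub_submatrix_castSucc_mulVec {n : ℕ} {R : Type*} [CommRing R]
    (P : Matrix (Fin (n + 1)) (Fin (n + 1)) R) {d w : Fin (n + 1) → R}
    (h : d = P *ᵥ d + w) (hd : d (Fin.last n) = 0) :
    (1 - P.submatrix Fin.castSucc Fin.castSucc) *ᵥ (d ∘ Fin.castSucc) = w ∘ Fin.castSucc := by
  rw [sub_mulVec, one_mulVec, submatrix_castSucc_mulVec P hd]
  nth_rw 1 [h]
  funext i
  simp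

lemma Matrix.eq_inv_mulVec_of_mulVec_eq {ι R : Type*} [Fintype ι] [DecidableEq ι] [CommRing R]
    {A : Matrix ι ι R} (hA : IsUnit A) {x y : ι → R} (h : A *ᵥ x = y) : x = A⁻¹ *ᵥ y := by
  obtain ⟨_⟩ := hA.nonempty_invertible
  exact (inv_mulVec_eq_vec h.symm).symm

lemma Matrix.abs_mulVec_apply_le {m k : Type*} [Fintype m] [Fintype k]
    (B : Matrix m k ℝ) (y : k → ℝ) (i : m) :
    |(B *ᵥ y) i| ≤ √(∑ i, ∑ j, B i j ^ 2) * √(∑ j, y j ^ 2) := by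
  rw [← Real.sqrt_mul (by positivity)]
  apply Real.abs_le_sqrt
  calc (B *ᵥ y) i ^ 2 ≤ (∑ j, B i j ^ 2) * ∑ j, y j ^ 2 := sum_mul_sq_le_sq_mul_sq _ _ _
    _ ≤ (∑ i, ∑ j, B i j ^ 2) * ∑ j, y j ^ 2 := by
      gcongr
      exact single_le_sum (f := fun i => ∑ j, B i j ^ 2) (fun _ _ => by positivity) (mem_univ i)

lemma Fin.sum_castSucc_le_sum {n : ℕ} {f : Fin (n + 1) → ℝ} (hf : ∀ i, 0 ≤ f i) :
    ∑ i : Fin n, f i.castSucc ≤ ∑ i, f i := by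
  rw [Fin.sum_univ_castSucc]
  linarith [hf (Fin.last n)]

theorem bellman_anchored_difference_bound_general
    {n : ℕ}
    (Ps Pr : Matrix (Fin (n + 1)) (Fin (n + 1)) ℝ)
    (rbar vs vr : Fin (n + 1) → ℝ) (η : ℝ)
    (hvs : vs = rbar - η • (fun _ => (1 : ℝ)) + Ps *ᵥ vs)
    (hvr : vr = rbar - η • (fun _ => (1 : ℝ)) + Pr *ᵥ vr)
    (hvs0 : vs (Fin.last n) = 0) (hvr0 : vr (Fin.last n) = 0)
    (hinv : IsUnit ((1 : Matrix (Fin n) (Fin n) ℝ) -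
      Matrix.of (fun i j : Fin n => Ps i.castSucc j.castSucc))) :
    ∀ i, |vs i - vr i| ≤
      Real.sqrt (∑ i, ∑ j,
        (((1 : Matrix (Fin n) (Fin n) ℝ) -
          Matrix.of (fun i j : Fin n => Ps i.castSucc j.castSucc))⁻¹ i j) ^ 2) *
      Real.sqrt (∑ i, (((Ps - Pr) *ᵥ vr) i) ^ 2) := by
  set w := (Ps - Pr) *ᵥ vr
  have hdiff : vs - vr = Ps *ᵥ (vs - vr) + w := sub_eq_mulVec_sub_add Ps Pr hvs hvr
  have hlast : (vs - vr) (Fin.last n) = 0 := by simp [hvs0, hvr0]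
  have htrunc := eq_inv_mulVec_of_mulVec_eq hinv
    (one_sub_submatrix_castSucc_mulVec Ps hdiff hlast)
  intro i
  induction i using Fin.lastCases with
  | last =>
    rw [hvs0, hvr0, sub_self, abs_zero]
    positivity
  | cast i =>
    calc |vs i.castSucc - vr i.castSucc| = |(_ *ᵥ (w ∘ Fin.castSucc)) i| := by
          rw [← congrFun htrunc i]; rfl
      _ ≤ _ := abs_mulVec_apply_le _ _ i
      _ ≤ _ := by
          gcongr
          exact Fin.sum_castSucc_le_sum fun _ => sq_nonneg _

/-- For anchored solutions of the average-reward Bellman equations of two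
row-stochastic matrices (on a state space of size `n+1 ≥ 2`), each coordinate of the
difference is bounded by `‖(Ĩ − P̃s)⁻¹‖_F · ‖(Ps − Pr) vr‖₂`, where `P̃s` is the
top-left `n×n` block of `Ps`. -/
theorem bellman_anchored_difference_bound
    {n : ℕ} (hn : 1 ≤ n)
    (Ps Pr : Matrix (Fin (n + 1)) (Fin (n + 1)) ℝ)
    (rbar vs vr : Fin (n + 1) → ℝ) (η : ℝ)
    (hPs : (∀ i j, 0 ≤ Ps i j) ∧ ∀ i, ∑ j, Ps i j = 1)
    (hPr : (∀ i j, 0 ≤ Pr i j) ∧ ∀ i, ∑ j, Pr i j = 1)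
    (hvs : vs = rbar - η • (fun _ => (1 : ℝ)) + Ps *ᵥ vs)
    (hvr : vr = rbar - η • (fun _ => (1 : ℝ)) + Pr *ᵥ vr)
    (hvs0 : vs (Fin.last n) = 0) (hvr0 : vr (Fin.last n) = 0)
    (hinv : IsUnit ((1 : Matrix (Fin n) (Fin n) ℝ) -
      Matrix.of (fun i j : Fin n => Ps i.castSucc j.castSucc))) :
    ∀ i, |vs i - vr i| ≤
      Real.sqrt (∑ i, ∑ j,
        (((1 : Matrix (Fin n) (Fin n) ℝ) -
          Matrix.of (fun i j : Fin n => Ps i.castSucc j.castSucc))⁻¹ i j) ^ 2) *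
      Real.sqrt (∑ i, (((Ps - Pr) *ᵥ vr) i) ^ 2) :=
  bellman_anchored_difference_bound_general Ps Pr rbar vs vr η hvs hvr hvs0 hvr0 hinv
end

section
/- Let P_1, …, P_K be n×n irreducible row-stochastic matrices with stationary distributions μ_1, …, μ_K all having positive entries, let D_k = diag(μ_k), let β be a probability vector over {1,…,K} with β_k > 0 for every k, and let A = Σ_k β_k D_k (P_k − I). Let Φ ∈ ℝ^{n×d} have full column rank and satisfy Φ w ≠ e for every w ∈ ℝ^d. Then the d×d matrix Φᵀ A Φ is invertible; in particular, for any b ∈ ℝ^n the equation Φᵀ A Φ v + Φᵀ b = 0 has a unique solution v ∈ ℝ^d. -/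
/-!
For a row-stochastic `P` with stationary distribution `μ`, the quadratic form of
`diag(μ) (P - I)` is minus half the Dirichlet form `∑ μᵢ Pᵢⱼ (xᵢ - xⱼ)²`. Hence the quadratic
form of `A` is `≤ 0`, and it vanishes only if `x` is constant along every edge of the
transition graph of some `P_k`, i.e. (by irreducibility) only on constant vectors. The range
of `Φ` meets the constants only in `0`, so `vᵀ Φᵀ A Φ v ≠ 0` for `v ≠ 0`: the square matrix
`Φᵀ A Φ` has trivial kernel and is therefore invertible.
-/

open Finset Matrix

namespace Matrix

section CommRing

variable {ι R : Type*} [Fintype ι] [DecidableEq ι] [CommRing R]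

def dirichletForm (μ : ι → R) (P : Matrix ι ι R) (x : ι → R) : R :=
  ∑ i, ∑ j, μ i * P i j * (x i - x j) ^ 2

theorem two_mul_dotProduct_diagonal_mul_sub_one_mulVec {μ : ι → R} {P : Matrix ι ι R}
    (hrow : ∀ i, ∑ j, P i j = 1) (hμP : μ ᵥ* P = μ) (x : ι → R) :
    2 * x ⬝ᵥ ((diagonal μ * (P - 1)) *ᵥ x) = -dirichletForm μ P x := by
  have hrows : ∑ i, ∑ j, μ i * P i j * x i ^ 2 = ∑ i, μ i * x i ^ 2 := by
    refine sum_congr rfl fun i _ => ?_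
    rw [← sum_mul, ← mul_sum, hrow, mul_one]
  have hcols : ∑ i, ∑ j, μ i * P i j * x j ^ 2 = ∑ j, μ j * x j ^ 2 := by
    rw [sum_comm]
    refine sum_congr rfl fun j _ => ?_
    rw [← sum_mul, ← congrFun hμP j]
    rfl
  have hlhs : x ⬝ᵥ ((diagonal μ * (P - 1)) *ᵥ x)
      = ∑ i, ∑ j, μ i * P i j * (x i * x j) - ∑ i, μ i * x i ^ 2 := by
    rw [← mulVec_mulVec, sub_mulVec, one_mulVec, dotProduct, ← sum_sub_distrib]
    refine sum_congr rfl fun i _ => ?_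
    rw [mulVec_diagonal, Pi.sub_apply, mulVec, dotProduct, mul_sub, mul_sub, mul_sum, mul_sum]
    congr 1
    · exact sum_congr rfl fun j _ => by ring
    · ring
  have hform : dirichletForm μ P x = ∑ i, ∑ j, μ i * P i j * x i ^ 2
      - 2 * ∑ i, ∑ j, μ i * P i j * (x i * x j) + ∑ i, ∑ j, μ i * P i j * x j ^ 2 := by
    simp only [dirichletForm, mul_sum, ← sum_sub_distrib, ← sum_add_distrib]
    exact sum_congr rfl fun i _ => sum_congr rfl fun j _ => by ring
  rw [hlhs, hform, hrows, hcols]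
  ring

end CommRing

section Irreducible

variable {ι R : Type*} [Ring R] [LinearOrder R]

theorem IsIrreducible.eq_of_forall_pos_imp_eq {α : Type*} {A : Matrix ι ι R}
    (hA : A.IsIrreducible) {x : ι → α} (hx : ∀ i j, 0 < A i j → x i = x j) (i j : ι) :
    x i = x j := by
  let := toQuiver A
  obtain ⟨p, -⟩ := hA.connected i j
  induction p with
  | nil => rfl
  | cons _ e ih => exact ih.trans (hx _ _ e.down)

end Irreducible

section Ordered

variable {ι R : Type*} [Fintype ι] [CommRing R] [LinearOrder R] [IsStrictOrderedRing R]
  {μ : ι → R} {P : Matrix ι ι R} {x : ι → R}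

theorem dirichletForm_nonneg (hμ : ∀ i, 0 ≤ μ i) (hP : ∀ i j, 0 ≤ P i j) :
    0 ≤ dirichletForm μ P x :=
  sum_nonneg fun i _ => sum_nonneg fun j _ => by have := hμ i; have := hP i j; positivity

theorem eq_of_dirichletForm_eq_zero (hμ : ∀ i, 0 < μ i) (hP : ∀ i j, 0 ≤ P i j)
    (h : dirichletForm μ P x = 0) {i j : ι} (hij : 0 < P i j) : x i = x j := by
  have hterm_nonneg : ∀ i j, 0 ≤ μ i * P i j * (x i - x j) ^ 2 := fun i j => by
    have := hμ i; have := hP i j; positivity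
  have hterm : μ i * P i j * (x i - x j) ^ 2 = 0 := by
    rw [dirichletForm, sum_eq_zero_iff_of_nonneg fun i _ =>
      sum_nonneg fun j _ => hterm_nonneg i j] at h
    exact (sum_eq_zero_iff_of_nonneg fun j _ => hterm_nonneg i j).1 (h i (mem_univ i)) j
      (mem_univ j)
  rw [mul_eq_zero, mul_eq_zero, pow_eq_zero_iff two_ne_zero, sub_eq_zero] at hterm
  exact hterm.resolve_left (not_or.2 ⟨(hμ i).ne', hij.ne'⟩)

theorem IsIrreducible.eq_of_dirichletForm_eq_zero (hP : P.IsIrreducible) (hμ : ∀ i, 0 < μ i)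
    (h : dirichletForm μ P x = 0) (i j : ι) : x i = x j :=
  hP.eq_of_forall_pos_imp_eq (fun _ _ => Matrix.eq_of_dirichletForm_eq_zero hμ hP.nonneg h) i j

end Ordered

section Quadratic

variable {ι κ K : Type*} [Fintype κ]

theorem dotProduct_sum_smul_mulVec [Fintype ι] [CommSemiring K] {α : Type*} (s : Finset α)
    (β : α → K) (A : α → Matrix ι ι K) (x : ι → K) :
    x ⬝ᵥ ((∑ k ∈ s, β k • A k) *ᵥ x) = ∑ k ∈ s, β k * x ⬝ᵥ (A k *ᵥ x) := by
  simp only [sum_mulVec, dotProduct_sum, smul_mulVec, dotProduct_smul, smul_eq_mul]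

theorem dotProduct_transpose_mul_mul_mulVec [Fintype ι] [CommSemiring K] (Φ : Matrix ι κ K)
    (A : Matrix ι ι K) (v : κ → K) :
    v ⬝ᵥ ((Φᵀ * A * Φ) *ᵥ v) = (Φ *ᵥ v) ⬝ᵥ (A *ᵥ (Φ *ᵥ v)) := by
  rw [← mulVec_mulVec, ← mulVec_mulVec, dotProduct_mulVec, vecMul_transpose]

variable [Field K]

theorem eq_zero_of_forall_mulVec_apply_eq {Φ : Matrix ι κ K} (hΦ : Function.Injective Φ.mulVec)
    (he : ∀ w, Φ *ᵥ w ≠ fun _ => 1) {v : κ → K} (hv : ∀ i j, (Φ *ᵥ v) i = (Φ *ᵥ v) j) :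
    v = 0 := by
  rcases isEmpty_or_nonempty ι with hι | ⟨⟨i₀⟩⟩
  · exact absurd (Subsingleton.elim _ _) (he 0)
  by_cases hc : (Φ *ᵥ v) i₀ = 0
  · exact hΦ <| by ext i; rw [hv i i₀, hc, mulVec_zero, Pi.zero_apply]
  · refine absurd ?_ (he (((Φ *ᵥ v) i₀)⁻¹ • v))
    ext i
    rw [mulVec_smul, Pi.smul_apply, hv i i₀, smul_eq_mul, inv_mul_cancel₀ hc]

variable [DecidableEq κ]

theorem isUnit_of_forall_dotProduct_mulVec_eq_zero {M : Matrix κ κ K}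
    (h : ∀ v, v ⬝ᵥ (M *ᵥ v) = 0 → v = 0) : IsUnit M := by
  refine mulVec_injective_iff_isUnit.1 fun v w hvw => sub_eq_zero.1 (h _ ?_)
  rw [mulVec_sub, hvw, sub_self, dotProduct_zero]

theorem IsUnit.existsUnique_mulVec_add_eq_zero {M : Matrix κ κ K} (hM : IsUnit M) (c : κ → K) :
    ∃! v, M *ᵥ v + c = 0 := by
  have hbij : Function.Bijective M.mulVec :=
    ⟨mulVec_injective_iff_isUnit.2 hM, mulVec_surjective_iff_isUnit.2 hM⟩
  simpa only [add_eq_zero_iff_eq_neg] using hbij.existsUnique (-c)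

end Quadratic

end Matrix

/-- With `A = Σ_k β_k D_k (P_k − I)` built from irreducible row-stochastic
matrices with positive stationary distributions, strictly positive mixing weights, and a
full-column-rank feature matrix `Φ` with `Φ w ≠ e` for all `w`, the matrix `Φᵀ A Φ` is
invertible; in particular `Φᵀ A Φ v + Φᵀ b = 0` has a unique solution for every `b`. -/
theorem critic_fixed_point_unique
    {n d K : ℕ}
    (P : Fin K → Matrix (Fin n) (Fin n) ℝ) (μ : Fin K → Fin n → ℝ)
    (β : Fin K → ℝ) (Φ : Matrix (Fin n) (Fin d) ℝ)
    (hP : ∀ k, (∀ i j, 0 ≤ P k i j) ∧ ∀ i, ∑ j, P k i j = 1)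
    (hirr : ∀ k, ∀ i j : Fin n, ∃ m : ℕ, 1 ≤ m ∧ 0 < (P k ^ m) i j)
    (hμ : ∀ k, (∀ i, 0 < μ k i) ∧ ∑ i, μ k i = 1)
    (hμP : ∀ k, μ k ᵥ* P k = μ k)
    (hβpos : ∀ k, 0 < β k) (hβsum : ∑ k, β k = 1)
    (hΦrank : Function.Injective fun w : Fin d → ℝ => Φ *ᵥ w)
    (hΦe : ∀ w : Fin d → ℝ, Φ *ᵥ w ≠ fun _ => (1 : ℝ)) :
    IsUnit (Φᵀ * (∑ k, β k • (Matrix.diagonal (μ k) * (P k - 1))) * Φ) ∧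
    ∀ b : Fin n → ℝ, ∃! v : Fin d → ℝ,
      (Φᵀ * (∑ k, β k • (Matrix.diagonal (μ k) * (P k - 1))) * Φ) *ᵥ v
        + Φᵀ *ᵥ b = 0 := by
  set A := ∑ k, β k • (diagonal (μ k) * (P k - 1))
  have hform (x : Fin n → ℝ) : 2 * x ⬝ᵥ (A *ᵥ x) = -∑ k, β k * dirichletForm (μ k) (P k) x := by
    simp only [A, dotProduct_sum_smul_mulVec, mul_sum, mul_left_comm (2 : ℝ),
      two_mul_dotProduct_diagonal_mul_sub_one_mulVec (hP _).2 (hμP _), mul_neg, sum_neg_distrib]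
  obtain ⟨k₀⟩ : Nonempty (Fin K) := by
    by_contra! hK
    simp at hβsum
  have hconst (x : Fin n → ℝ) (hx : x ⬝ᵥ (A *ᵥ x) = 0) (i j : Fin n) : x i = x j := by
    have hterm_nonneg (k : Fin K) : 0 ≤ β k * dirichletForm (μ k) (P k) x :=
      mul_nonneg (hβpos k).le (dirichletForm_nonneg (fun i => ((hμ k).1 i).le) (hP k).1)
    have hterm : β k₀ * dirichletForm (μ k₀) (P k₀) x = 0 :=
      (sum_eq_zero_iff_of_nonneg fun k _ => hterm_nonneg k).1
        (by linarith [hform x]) k₀ (mem_univ k₀)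
    have hirr₀ : (P k₀).IsIrreducible := (isIrreducible_iff_exists_pow_pos (hP k₀).1).2 (hirr k₀)
    exact hirr₀.eq_of_dirichletForm_eq_zero (hμ k₀).1
      ((mul_eq_zero.1 hterm).resolve_left (hβpos k₀).ne') i j
  have hunit : IsUnit (Φᵀ * A * Φ) := isUnit_of_forall_dotProduct_mulVec_eq_zero fun v hv =>
    eq_zero_of_forall_mulVec_apply_eq hΦrank hΦe
      (hconst _ (by rwa [← dotProduct_transpose_mul_mul_mulVec]))
  exact ⟨hunit, fun b => hunit.existsUnique_mulVec_add_eq_zero _⟩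
end

section
/- Let S be a finite state space and A a finite action space, P_1, …, P_K transition kernels, r : S × A → ℝ, φ : S → ℝ^d, and β a probability vector over {1,…,K}. Let θ ↦ π_θ(a|s) be differentiable on ℝ^m with each π_θ(·|s) a probability distribution on A; let θ ↦ μ_k(θ) be differentiable with μ_k(θ) a stationary distribution of the induced Markov matrix P_k^{π_θ}; and let θ ↦ v(θ) ∈ ℝ^d be differentiable. Define η_k(θ) = Σ_s μ_k(θ)(s) Σ_a π_θ(a|s) r(s,a), η̄(θ) = Σ_k β_k η_k(θ), Q̄_k(θ,s,a) = r(s,a) − η_k(θ) + Σ_{s'} P_k(s'|s,a) φ(s')ᵀ v(θ), and V̄_k(θ,s) = Σ_a π_θ(a|s) Q̄_k(θ,s,a). Then the gradient of the mixed average reward satisfies ∇_θ η̄(θ) = Σ_k β_k Σ_s μ_k(θ)(s) Σ_a ∇_θ π_θ(a|s) · Q̄_k(θ,s,a) + Σ_k β_k Σ_s μ_k(θ)(s) · ( ∇_θ( φ(s)ᵀ v(θ) ) − ∇_θ V̄_k(θ,s) ). -/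
/-!
Differentiating `Q̄_k = r - η_k + Σ_{s'} P_k(s'|·,·) φ(s')ᵀv` gives
`∇Q̄_k = Σ_{s'} P_k ∇(φ(s')ᵀv) - ∇η_k`. Averaging `∇V̄_k = Σ_a (π ∇Q̄_k + Q̄_k ∇π)` over
`μ_k`, the term `-∇η_k` survives because `π(·|s)` and `μ_k` are probability vectors, while the
`π`-weighted `P_k`-average of `∇(φᵀv)` collapses to its `μ_k`-average by stationarity. Solving for
`∇η_k` gives the single-kernel identity, for any differentiable `η_k`; the mixed identity is its
`β`-combination.
-/

open Finset

section Stationary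

variable {R M S A : Type*} [Ring R] [AddCommGroup M] [Module R M] [Fintype S] [Fintype A]

theorem sum_smul_sum_smul_of_stationary {μ : S → R} {T : S → S → R}
    (hμ : ∀ s', ∑ s, μ s * T s s' = μ s') (f : S → M) :
    ∑ s, μ s • ∑ s', T s s' • f s' = ∑ s', μ s' • f s' := by
  simp_rw [smul_sum, smul_smul]
  rw [sum_comm]
  simp_rw [← sum_smul, hμ]

theorem eq_policy_gradient_add_baseline_correction {μ : S → R} {π : S → A → R}
    {P : S → A → S → R} (hμ : ∑ s, μ s = 1) (hπ : ∀ s, ∑ a, π s a = 1)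
    (hstat : ∀ s', ∑ s, μ s * ∑ a, π s a * P s a s' = μ s')
    (Q : S → A → R) (Dη : M) (Dπ : S → A → M) (Db : S → M) :
    Dη = ∑ s, μ s • ∑ a, Q s a • Dπ s a
      + ∑ s, μ s • (Db s - ∑ a, (π s a • (∑ s', P s a s' • Db s' - Dη) + Q s a • Dπ s a)) := by
  have hmix : ∀ s, ∑ a, π s a • ∑ s', P s a s' • Db s'
      = ∑ s', (∑ a, π s a * P s a s') • Db s' := fun s => by
    simp_rw [smul_sum, smul_smul, sum_smul]
    exact sum_comm
  have hDη : ∀ s, ∑ a, π s a • Dη = Dη := fun s => by rw [← sum_smul, hπ, one_smul]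
  simp_rw [sum_add_distrib, smul_sub, sum_sub_distrib, hmix, hDη]
  simp only [smul_add, smul_sub, sum_add_distrib, sum_sub_distrib]
  rw [sum_smul_sum_smul_of_stationary hstat, ← sum_smul, hμ, one_smul]
  abel

end Stationary

theorem fderiv_eq_policy_gradient_add_baseline_correction {S A F : Type*} [Fintype S] [Fintype A]
    [NormedAddCommGroup F] [NormedSpace ℝ F]
    (π : F → S → A → ℝ) (P : S → A → S → ℝ) (μ : S → ℝ) (η : F → ℝ) (b : S → F → ℝ)
    (c : S → A → ℝ) (Q : F → S → A → ℝ) (V : F → S → ℝ) {θ : F}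
    (hπ : ∀ s, ∑ a, π θ s a = 1) (hπdiff : ∀ s a, DifferentiableAt ℝ (fun θ' => π θ' s a) θ)
    (hμ : ∑ s, μ s = 1) (hstat : ∀ s', ∑ s, μ s * ∑ a, π θ s a * P s a s' = μ s')
    (hη : DifferentiableAt ℝ η θ) (hb : ∀ s, DifferentiableAt ℝ (b s) θ)
    (hQ : ∀ θ s a, Q θ s a = c s a - η θ + ∑ s', P s a s' * b s' θ)
    (hV : ∀ θ s, V θ s = ∑ a, π θ s a * Q θ s a) :
    fderiv ℝ η θ =
      ∑ s, μ s • ∑ a, Q θ s a • fderiv ℝ (fun θ' => π θ' s a) θ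
        + ∑ s, μ s • (fderiv ℝ (b s) θ - fderiv ℝ (fun θ' => V θ' s) θ) := by
  have hQ' : ∀ s a, HasFDerivAt (fun θ' => Q θ' s a)
      (∑ s', P s a s' • fderiv ℝ (b s') θ - fderiv ℝ η θ) θ := fun s a => by
    simp_rw [hQ, sub_add_comm (c s a)]
    exact (HasFDerivAt.fun_sum fun s' _ => (hb s').hasFDerivAt.const_mul _).fun_sub
      hη.hasFDerivAt |>.add_const _
  have hV' : ∀ s, HasFDerivAt (fun θ' => V θ' s)
      (∑ a, (π θ s a • (∑ s', P s a s' • fderiv ℝ (b s') θ - fderiv ℝ η θ)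
        + Q θ s a • fderiv ℝ (fun θ' => π θ' s a) θ)) θ := fun s => by
    simp_rw [hV]
    exact HasFDerivAt.fun_sum fun a _ => (hπdiff s a).hasFDerivAt.fun_mul (hQ' s a)
  simp_rw [(hV' _).fderiv]
  exact eq_policy_gradient_add_baseline_correction hμ hπ hstat _ _ _ _

theorem mixed_average_reward_gradient_general
    {S A : Type*} [Fintype S] [Fintype A]
    {K d m : ℕ}
    (π : (Fin m → ℝ) → S → A → ℝ)
    (P : Fin K → S → A → S → ℝ)
    (μ : Fin K → (Fin m → ℝ) → S → ℝ)
    (v : (Fin m → ℝ) → Fin d → ℝ)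
    (φ : S → Fin d → ℝ) (r : S → A → ℝ) (β : Fin K → ℝ)
    (hπ : ∀ θ s, (∀ a, 0 ≤ π θ s a) ∧ ∑ a, π θ s a = 1)
    (hπdiff : ∀ s a, Differentiable ℝ fun θ => π θ s a)
    (hμ : ∀ k θ, (∀ s, 0 ≤ μ k θ s) ∧ ∑ s, μ k θ s = 1)
    (hμstat : ∀ k θ s', ∑ s, μ k θ s * ∑ a, π θ s a * P k s a s' = μ k θ s')
    (hμdiff : ∀ k s, Differentiable ℝ fun θ => μ k θ s)
    (hvdiff : ∀ i, Differentiable ℝ fun θ => v θ i)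
    -- named auxiliary quantities
    (ηk : Fin K → (Fin m → ℝ) → ℝ)
    (hηk : ∀ k θ, ηk k θ = ∑ s, μ k θ s * ∑ a, π θ s a * r s a)
    (ηbar : (Fin m → ℝ) → ℝ)
    (hηbar : ∀ θ, ηbar θ = ∑ k, β k * ηk k θ)
    (Q : Fin K → (Fin m → ℝ) → S → A → ℝ)
    (hQ : ∀ k θ s a, Q k θ s a =
      r s a - ηk k θ + ∑ s', P k s a s' * ∑ i, φ s' i * v θ i)
    (V : Fin K → (Fin m → ℝ) → S → ℝ)
    (hV : ∀ k θ s, V k θ s = ∑ a, π θ s a * Q k θ s a)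
    (θ : Fin m → ℝ) :
    fderiv ℝ ηbar θ =
      (∑ k, β k • ∑ s, μ k θ s • ∑ a,
          Q k θ s a • fderiv ℝ (fun θ' => π θ' s a) θ)
      +
      (∑ k, β k • ∑ s, μ k θ s •
          (fderiv ℝ (fun θ' => ∑ i, φ s i * v θ' i) θ
            - fderiv ℝ (fun θ' => V k θ' s) θ)) := by
  have hηk_diff : ∀ k, Differentiable ℝ (ηk k) := fun k => by
    rw [funext (hηk k)]
    fun_prop
  have hηbar_fderiv : fderiv ℝ ηbar θ = ∑ k, β k • fderiv ℝ (ηk k) θ := by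
    rw [funext hηbar]
    exact (HasFDerivAt.fun_sum fun k _ => (hηk_diff k θ).hasFDerivAt.const_mul (β k)).fderiv
  rw [hηbar_fderiv, ← sum_add_distrib]
  refine sum_congr rfl fun k _ => ?_
  rw [← smul_add, fderiv_eq_policy_gradient_add_baseline_correction π (P k) (μ k θ) (ηk k)
    (fun s θ' => ∑ i, φ s i * v θ' i) r (Q k) (V k) (fun s => (hπ θ s).2)
    (fun s a => hπdiff s a θ) (hμ k θ).2 (hμstat k θ) (hηk_diff k θ) (fun s => by fun_prop)
    (hQ k) (hV k)]

/-- Gradient decomposition of the mixed average reward: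
`∇η̄(θ) = Σ_k β_k Σ_s μ_k(θ)(s) Σ_a ∇π_θ(a|s)·Q̄_k(θ,s,a)
        + Σ_k β_k Σ_s μ_k(θ)(s)·(∇(φ(s)ᵀ v(θ)) − ∇V̄_k(θ,s))`. -/
theorem mixed_average_reward_gradient
    {S A : Type*} [Fintype S] [Fintype A]
    {K d m : ℕ}
    (π : (Fin m → ℝ) → S → A → ℝ)
    (P : Fin K → S → A → S → ℝ)
    (μ : Fin K → (Fin m → ℝ) → S → ℝ)
    (v : (Fin m → ℝ) → Fin d → ℝ)
    (φ : S → Fin d → ℝ) (r : S → A → ℝ) (β : Fin K → ℝ)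
    (hP : ∀ k s a, (∀ s', 0 ≤ P k s a s') ∧ ∑ s', P k s a s' = 1)
    (hβ : (∀ k, 0 ≤ β k) ∧ ∑ k, β k = 1)
    (hπ : ∀ θ s, (∀ a, 0 ≤ π θ s a) ∧ ∑ a, π θ s a = 1)
    (hπdiff : ∀ s a, Differentiable ℝ fun θ => π θ s a)
    (hμ : ∀ k θ, (∀ s, 0 ≤ μ k θ s) ∧ ∑ s, μ k θ s = 1)
    (hμstat : ∀ k θ s', ∑ s, μ k θ s * ∑ a, π θ s a * P k s a s' = μ k θ s')
    (hμdiff : ∀ k s, Differentiable ℝ fun θ => μ k θ s)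
    (hvdiff : ∀ i, Differentiable ℝ fun θ => v θ i)
    -- named auxiliary quantities
    (ηk : Fin K → (Fin m → ℝ) → ℝ)
    (hηk : ∀ k θ, ηk k θ = ∑ s, μ k θ s * ∑ a, π θ s a * r s a)
    (ηbar : (Fin m → ℝ) → ℝ)
    (hηbar : ∀ θ, ηbar θ = ∑ k, β k * ηk k θ)
    (Q : Fin K → (Fin m → ℝ) → S → A → ℝ)
    (hQ : ∀ k θ s a, Q k θ s a =
      r s a - ηk k θ + ∑ s', P k s a s' * ∑ i, φ s' i * v θ i)
    (V : Fin K → (Fin m → ℝ) → S → ℝ)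
    (hV : ∀ k θ s, V k θ s = ∑ a, π θ s a * Q k θ s a)
    (θ : Fin m → ℝ) :
    fderiv ℝ ηbar θ =
      (∑ k, β k • ∑ s, μ k θ s • ∑ a,
          Q k θ s a • fderiv ℝ (fun θ' => π θ' s a) θ)
      +
      (∑ k, β k • ∑ s, μ k θ s •
          (fderiv ℝ (fun θ' => ∑ i, φ s i * v θ' i) θ
            - fderiv ℝ (fun θ' => V k θ' s) θ)) :=
  mixed_average_reward_gradient_general π P μ v φ r β hπ hπdiff hμ hμstat hμdiff hvdiff ηk hηk ηbar
    hηbar Q hQ V hV θ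
end
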